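/- The normalizer of the one-dimensional subalgebra ℂ(X_α+X_β) in G₂, i.e. {y∈G₂ : [y, ℂ(X_α+X_β)] ⊆ ℂ(X_α+X_β)}, equals ℂ(3H_α+5H_β) ⊕ ℂ(X_α+X_β) ⊕ ℂX_{3α+2β}; in particular this normalizer has dimension 3. -/

import Mathlib

/-!
Expand `y` in the Chevalley basis and bracket it with `v = X_α + X_β` using the multiplication
table. Comparing coefficients in `⁅y, v⁆ = t • v` kills every coordinate of `y` except those along
`H_α, H_β, X_α, X_β, X_{3α+2β}`, forces equal coefficients on `X_α` and `X_β`, and, reading off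
the `X_α`- and `X_β`-coefficients, `2 c_α - c_β = t = -3 c_α + 2 c_β`, i.e. `(c_α, c_β) ∝ (3, 5)`.
Conversely `3 H_α + 5 H_β` acts on both `X_α` and `X_β` by `1`, and `X_{3α+2β}` commutes with
both since `4α + 2β` and `3α + 3β` are not roots.
-/

namespace G2Formal

/-- The positive roots of `G₂`: the pair `(k, l)` encodes `k•α + l•β`,
where `α` is the short simple root and `β` is the long simple root. -/
def PhiP : Set (ℤ × ℤ) := {(1,0), (0,1), (1,1), (2,1), (3,1), (3,2)}

/-- All twelve roots of `G₂`. -/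
def Phi : Set (ℤ × ℤ) :=
  {(1,0), (0,1), (1,1), (2,1), (3,1), (3,2),
   (-1,0), (0,-1), (-1,-1), (-2,-1), (-3,-1), (-3,-2)}

/-- The invariant inner product on the root space, normalized by `(α,α) = 1`,
`(β,β) = 3`, `(α,β) = -3/2`. -/
def ip (μ ν : ℤ × ℤ) : ℚ :=
  (μ.1 * ν.1 : ℤ) - (3/2 : ℚ) * ((μ.1 * ν.2 + μ.2 * ν.1 : ℤ)) + 3 * ((μ.2 * ν.2 : ℤ) : ℚ)

/-- The Cartan pairing `⟨ν, μ^∨⟩ = 2(μ,ν)/(μ,μ)`. -/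
def cart (μ ν : ℤ × ℤ) : ℚ := 2 * ip μ ν / ip μ μ

/-- Base table of structure constants `N_{μ,ν}` from the multiplication table of `G₂`. -/
def N0 (μ ν : ℤ × ℤ) : ℤ :=
  if μ = (0,1) ∧ ν = (1,0) then 1
  else if μ = (0,1) ∧ ν = (3,1) then 1
  else if μ = (3,1) ∧ ν = (-3,-2) then 1
  else if μ = (2,1) ∧ ν = (-3,-1) then 1
  else if μ = (2,1) ∧ ν = (-3,-2) then 1
  else if μ = (-3,-2) ∧ ν = (1,1) then 1
  else if μ = (-3,-2) ∧ ν = (0,1) then 1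
  else if μ = (-3,-1) ∧ ν = (1,0) then 1
  else if μ = (-1,-1) ∧ ν = (0,1) then 1
  else if μ = (1,1) ∧ ν = (1,0) then 2
  else if μ = (1,0) ∧ ν = (-2,-1) then 2
  else if μ = (-2,-1) ∧ ν = (1,1) then 2
  else if μ = (1,0) ∧ ν = (2,1) then 3
  else if μ = (1,0) ∧ ν = (-1,-1) then 3
  else if μ = (1,1) ∧ ν = (2,1) then 3
  else 0

/-- The full table of structure constants, obtained from the base table via
`N_{μ,ν} = -N_{ν,μ} = -N_{-μ,-ν}`. -/
def Nc (μ ν : ℤ × ℤ) : ℤ := N0 μ ν - N0 ν μ - N0 (-μ) (-ν) + N0 (-ν) (-μ)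

variable {L : Type*} [LieRing L] [LieAlgebra ℂ L]

/-- The coroot `H_μ` expressed in the basis `H_α`, `H_β` of the Cartan subalgebra. -/
noncomputable def Hr (Hα Hβ : L) (μ : ℤ × ℤ) : L :=
  ((((μ.1 : ℚ) / ip μ μ : ℚ) : ℂ)) • Hα + ((((3 * μ.2 : ℚ) / ip μ μ : ℚ) : ℂ)) • Hβ

/-- The Chevalley basis of `G₂` as a family indexed by `Fin 14`. -/
def chev (Hα Hβ : L) (X : ℤ × ℤ → L) : Fin 14 → L :=
  ![Hα, Hβ, X (1,0), X (-1,0), X (0,1), X (0,-1), X (1,1), X (-1,-1),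
    X (2,1), X (-2,-1), X (3,1), X (-3,-1), X (3,2), X (-3,-2)]

/-- `IsG2 Hα Hβ X` says that the complex Lie algebra `L`, together with the elements
`Hα`, `Hβ` and the root vectors `X γ` (for `γ` a root of `G₂`), realizes the multiplication
table of the simple complex Lie algebra of type `G₂` in its Chevalley basis, and that the
fourteen Chevalley basis vectors form a basis of `L`.  Any such `L` is a copy of `G₂`. -/
structure IsG2 (Hα Hβ : L) (X : ℤ × ℤ → L) : Prop where
  indep : LinearIndependent ℂ (chev Hα Hβ X)
  span_top : Submodule.span ℂ (Set.range (chev Hα Hβ X)) = ⊤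
  bracket_hh : ⁅Hα, Hβ⁆ = 0
  bracket_hx : ∀ μ ∈ Phi, ∀ ν ∈ Phi, ⁅Hr Hα Hβ μ, X ν⁆ = ((cart μ ν : ℚ) : ℂ) • X ν
  bracket_xnegx : ∀ μ ∈ Phi, ⁅X μ, X (-μ)⁆ = Hr Hα Hβ μ
  bracket_xx : ∀ μ ∈ Phi, ∀ ν ∈ Phi, μ + ν ∈ Phi →
    ⁅X μ, X ν⁆ = ((Nc μ ν : ℤ) : ℂ) • X (μ + ν)
  bracket_xx_zero : ∀ μ ∈ Phi, ∀ ν ∈ Phi, μ + ν ≠ 0 → μ + ν ∉ Phi → ⁅X μ, X ν⁆ = 0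

/-- Two Lie subalgebras of `L` are conjugate if some Lie algebra automorphism of `L`
maps one onto the other. -/
def SubalgConj (g k : LieSubalgebra ℂ L) : Prop :=
  ∃ s : L ≃ₗ⁅ℂ⁆ L, g.map s.toLieHom = k

/-- A submodule is conjugate (as a subalgebra) to a given submodule if some Lie algebra
automorphism of `L` maps it onto the latter. -/
def ModConj (W W' : Submodule ℂ L) : Prop :=
  ∃ s : L ≃ₗ⁅ℂ⁆ L, W.map (s.toLinearEquiv : L →ₗ[ℂ] L) = W'

/-- A Lie subalgebra of `G₂` is *regular* if it is conjugate to a subalgebra of the form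
`g(Σ, W) = W ⊕ ⊕_{γ ∈ Σ} ℂ X_γ` where `Σ ⊆ Φ` is closed and `W` is a subspace of the
Cartan subalgebra containing `[X_γ, X_{-γ}]` for every `γ ∈ Σ ∩ (-Σ)`. -/
def IsRegularSubalgebra (Hα Hβ : L) (X : ℤ × ℤ → L) (g : LieSubalgebra ℂ L) : Prop :=
  ∃ (S : Set (ℤ × ℤ)) (W : Submodule ℂ L) (k : LieSubalgebra ℂ L),
    S ⊆ Phi ∧
    (∀ x ∈ S, ∀ y ∈ S, x + y ∈ Phi → x + y ∈ S) ∧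
    W ≤ Submodule.span ℂ {Hα, Hβ} ∧
    (∀ γ ∈ S, -γ ∈ S → ⁅X γ, X (-γ)⁆ ∈ W) ∧
    k.toSubmodule = W ⊔ Submodule.span ℂ (X '' S) ∧
    SubalgConj g k

/-- A Levi subalgebra of a Lie algebra `g`: a semisimple subalgebra which is a vector
space complement of the solvable radical. -/
def IsLeviOf (g : LieSubalgebra ℂ L) (m : LieSubalgebra ℂ ↥g) : Prop :=
  LieAlgebra.IsSemisimple ℂ ↥m ∧
  IsCompl m.toSubmodule (LieAlgebra.radical ℂ ↥g).toSubmodule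

theorem forall_lie_mem_span_singleton_iff {R M : Type*} [CommRing R] [LieRing M] [LieAlgebra R M]
    {y v : M} : (∀ z ∈ R ∙ v, ⁅y, z⁆ ∈ R ∙ v) ↔ ⁅y, v⁆ ∈ R ∙ v := by
  refine ⟨fun hy => hy v (Submodule.mem_span_singleton_self v), fun hy z hz => ?_⟩
  obtain ⟨a, rfl⟩ := Submodule.mem_span_singleton.mp hz
  rw [lie_smul]
  exact Submodule.smul_mem _ a hy

instance decidableMemPhi (p : ℤ × ℤ) : Decidable (p ∈ Phi) :=
  inferInstanceAs (Decidable (p = (1,0) ∨ p = (0,1) ∨ p = (1,1) ∨ p = (2,1) ∨ p = (3,1) ∨ p = (3,2) ∨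
      p = (-1,0) ∨ p = (0,-1) ∨ p = (-1,-1) ∨ p = (-2,-1) ∨ p = (-3,-1) ∨ p = (-3,-2)))

section
variable {Hα Hβ : L} {X : ℤ × ℤ → L}

theorem Hr_one_zero : Hr Hα Hβ (1, 0) = Hα := by norm_num [Hr, ip]
theorem Hr_zero_one : Hr Hα Hβ (0, 1) = Hβ := by norm_num [Hr, ip]

theorem sum_smul_chev (c : Fin 14 → ℂ) :
    ∑ i, c i • chev Hα Hβ X i = c 0 • Hα + c 1 • Hβ + c 2 • X (1,0) + c 3 • X (-1,0) +
      c 4 • X (0,1) + c 5 • X (0,-1) + c 6 • X (1,1) + c 7 • X (-1,-1) + c 8 • X (2,1) +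
      c 9 • X (-2,-1) + c 10 • X (3,1) + c 11 • X (-3,-1) + c 12 • X (3,2) + c 13 • X (-3,-2) := by
  simp only [Fin.sum_univ_succ, Fin.sum_univ_zero, add_zero, add_assoc]
  rfl

namespace IsG2
variable (h : IsG2 Hα Hβ X)
include h

theorem lie_X_X {μ ν : ℤ × ℤ} (hμ : μ ∈ Phi) (hν : ν ∈ Phi) :
    ⁅X μ, X ν⁆ = if μ + ν = 0 then Hr Hα Hβ μ
      else if μ + ν ∈ Phi then ((Nc μ ν : ℤ) : ℂ) • X (μ + ν) else 0 := by
  split_ifs with h0 h1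
  · rw [← h.bracket_xnegx μ hμ, eq_neg_of_add_eq_zero_right h0]
  · exact h.bracket_xx μ hμ ν hν h1
  · exact h.bracket_xx_zero μ hμ ν hν h0 h1

theorem lie_Hα_X {ν : ℤ × ℤ} (hν : ν ∈ Phi) : ⁅Hα, X ν⁆ = ((cart (1, 0) ν : ℚ) : ℂ) • X ν := by
  rw [← h.bracket_hx _ (by decide) ν hν, Hr_one_zero]

theorem lie_Hβ_X {ν : ℤ × ℤ} (hν : ν ∈ Phi) : ⁅Hβ, X ν⁆ = ((cart (0, 1) ν : ℚ) : ℂ) • X ν := by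
  rw [← h.bracket_hx _ (by decide) ν hν, Hr_zero_one]

theorem lie_sum_smul_chev_Xα_add_Xβ (c : Fin 14 → ℂ) :
    ⁅∑ i, c i • chev Hα Hβ X i, X (1,0) + X (0,1)⁆ =
      ∑ i, ![-c 3, -c 5, 2 * c 0 - c 1, c 7, -3 * c 0 + 2 * c 1, -3 * c 7, c 4 - c 2,
        -2 * c 9, 2 * c 6, c 11, -3 * c 8, c 13, -c 10, 0] i • chev Hα Hβ X i := by
  rw [sum_smul_chev, sum_smul_chev]
  simp only [Matrix.cons_val, add_lie, smul_lie, lie_add]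
  simp (disch := decide) only [h.lie_X_X, h.lie_Hα_X, h.lie_Hβ_X]
  norm_num +decide [Nc, N0, cart, ip, Hr]
  module

theorem lie_smul_add_smul_add_smul_Xα_add_Xβ (a b d : ℂ) :
    ⁅a • ((3:ℂ) • Hα + (5:ℂ) • Hβ) + b • (X (1,0) + X (0,1)) + d • X (3,2), X (1,0) + X (0,1)⁆ =
      a • (X (1,0) + X (0,1)) := by
  simp only [add_lie, smul_lie, lie_add, lie_self]
  simp (disch := decide) only [h.lie_X_X, h.lie_Hα_X, h.lie_Hβ_X]
  norm_num +decide [Nc, N0, cart, ip]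
  module

theorem exists_eq_of_lie_Xα_add_Xβ_mem {y : L}
    (hy : ⁅y, X (1,0) + X (0,1)⁆ ∈ ℂ ∙ (X (1,0) + X (0,1))) :
    ∃ a b d : ℂ, a • ((3:ℂ) • Hα + (5:ℂ) • Hβ) + b • (X (1,0) + X (0,1)) + d • X (3,2) = y := by
  obtain ⟨c, rfl⟩ : ∃ c : Fin 14 → ℂ, ∑ i, c i • chev Hα Hβ X i = y :=
    (Submodule.mem_span_range_iff_exists_fun ℂ).mp (h.span_top ▸ Submodule.mem_top)
  obtain ⟨t, ht⟩ := Submodule.mem_span_singleton.mp hy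
  have hv : t • (X (1,0) + X (0,1)) =
      ∑ i, ![0, 0, t, 0, t, 0, 0, 0, 0, 0, 0, 0, 0, 0] i • chev Hα Hβ X i := by
    rw [sum_smul_chev]; simp only [Matrix.cons_val]; module
  obtain ⟨h3, h5, hα, h7, hβ, h42, h9, h6, h11, h8, h13, h10⟩ :
      c 3 = 0 ∧ c 5 = 0 ∧ 2 * c 0 - c 1 = t ∧ c 7 = 0 ∧ -(3 * c 0) + 2 * c 1 = t ∧
        c 4 - c 2 = 0 ∧ c 9 = 0 ∧ c 6 = 0 ∧ c 11 = 0 ∧ c 8 = 0 ∧ c 13 = 0 ∧ c 10 = 0 := by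
    have hcoord := Fintype.linearIndependent_iffₛ.mp h.indep _ _
      ((h.lie_sum_smul_chev_Xα_add_Xβ c).symm.trans (ht.symm.trans hv))
    simp only [Fin.forall_fin_succ, Matrix.cons_val_zero, Matrix.cons_val_succ,
      Matrix.cons_val_fin_one, neg_mul, neg_eq_zero, mul_eq_zero, OfNat.ofNat_ne_zero, false_or,
      implies_true, and_true] at hcoord
    tauto
  refine ⟨c 0 / 3, c 2, c 12, ?_⟩
  rw [sum_smul_chev, h3, h5, h7, h9, h6, h11, h8, h13, h10]
  linear_combination (norm := module) ((1/3 : ℂ) * (hα.trans hβ.symm)) • Hβ - h42 • X (0,1)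

theorem lie_Xα_add_Xβ_mem_span_iff (y : L) :
    ⁅y, X (1,0) + X (0,1)⁆ ∈ ℂ ∙ (X (1,0) + X (0,1)) ↔
      y ∈ Submodule.span ℂ ({(3:ℂ) • Hα + (5:ℂ) • Hβ, X (1,0) + X (0,1), X (3,2)} : Set L) := by
  rw [Submodule.mem_span_triple]
  refine ⟨h.exists_eq_of_lie_Xα_add_Xβ_mem, ?_⟩
  rintro ⟨a, b, d, rfl⟩
  rw [h.lie_smul_add_smul_add_smul_Xα_add_Xβ]
  exact Submodule.smul_mem _ a (Submodule.mem_span_singleton_self _)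

theorem linearIndependent_normalizer_gens :
    LinearIndependent ℂ ![(3:ℂ) • Hα + (5:ℂ) • Hβ, X (1,0) + X (0,1), X (3,2)] := by
  refine Fintype.linearIndependent_iff.mpr fun f hf => ?_
  have hchev : ∑ i, ![3 * f 0, 5 * f 0, f 1, 0, f 1, 0, 0, 0, 0, 0, 0, 0, f 2, 0] i •
      chev Hα Hβ X i = 0 := by
    rw [Fin.sum_univ_three] at hf
    rw [sum_smul_chev, ← hf]
    simp only [Matrix.cons_val]
    module
  have hf0 : f 0 = 0 ∧ f 1 = 0 ∧ f 2 = 0 := by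
    simpa [Fin.forall_fin_succ] using Fintype.linearIndependent_iff.mp h.indep _ hchev
  simp [Fin.forall_fin_succ, hf0]

theorem finrank_span_normalizer_gens :
    Module.finrank ℂ
      ↥(Submodule.span ℂ ({(3:ℂ) • Hα + (5:ℂ) • Hβ, X (1,0) + X (0,1), X (3,2)} : Set L)) = 3 := by
  have hrange : ({(3:ℂ) • Hα + (5:ℂ) • Hβ, X (1,0) + X (0,1), X (3,2)} : Set L) =
      Set.range ![(3:ℂ) • Hα + (5:ℂ) • Hβ, X (1,0) + X (0,1), X (3,2)] := by
    simp only [Matrix.range_cons, Matrix.range_empty, Set.union_empty, Set.singleton_union]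
  rw [hrange, finrank_span_eq_card h.linearIndependent_normalizer_gens, Fintype.card_fin]

end IsG2
end

/-- **Theorem.**  (An entry of Table 4 of the paper.)  The normalizer of the one-dimensional
subalgebra `ℂ(X_α + X_β)` in `G₂` equals
`ℂ(3H_α + 5H_β) ⊕ ℂ(X_α + X_β) ⊕ ℂX_{3α+2β}` (where `3H_α + 5H_β = 7·H_{9α+5β}`);
in particular this normalizer has dimension `3`. -/
theorem normalizer_of_Xalpha_plus_Xbeta
    {L : Type*} [LieRing L] [LieAlgebra ℂ L] (Hα Hβ : L) (X : ℤ × ℤ → L)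
    (hG2 : IsG2 Hα Hβ X) :
    (∀ y : L,
      (∀ z ∈ Submodule.span ℂ ({X (1,0) + X (0,1)} : Set L),
        ⁅y, z⁆ ∈ Submodule.span ℂ ({X (1,0) + X (0,1)} : Set L)) ↔
      y ∈ Submodule.span ℂ
        ({(3:ℂ) • Hα + (5:ℂ) • Hβ, X (1,0) + X (0,1), X (3,2)} : Set L)) ∧
    Module.finrank ℂ
      ↥(Submodule.span ℂ
        ({(3:ℂ) • Hα + (5:ℂ) • Hβ, X (1,0) + X (0,1), X (3,2)} : Set L)) = 3 :=
  ⟨fun y => forall_lie_mem_span_singleton_iff.trans (hG2.lie_Xα_add_Xβ_mem_span_iff y),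
    hG2.finrank_span_normalizer_gens⟩

end G2Formal
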